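/- Let Γ be a countable index set, L : Γ → ℝ with L γ ≥ ℓ₀ for some ℓ₀ > 0, and suppose there exist C₁ > 0 and h ≥ 0 such that for every ℓ > 0 the set {γ ∈ Γ : L γ ≤ ℓ} is finite with cardinality at most C₁ · e^{h·ℓ}. Let Λ : Γ → ℝ with Λ γ > 1 for all γ, and suppose there exist C₂ > 0 and β > 0 with (Λ γ)⁻¹ ≤ C₂ · e^{-β·L γ} for all γ. Let w : Γ → ℂ satisfy |w γ| ≤ A · L γ for some A > 0. Then for every λ ∈ ℂ with Re λ > h - (3/2)·β the doubly indexed family ((n, γ) ∈ ℕ_{≥1} × Γ ↦ e^{-λ·L γ} · (n+1) · (Λ γ)^{-1/2-n} · w γ) is absolutely summable, and the function λ ↦ ∑_{n≥1} ∑_{γ∈Γ} e^{-λ·L γ} (n+1) (Λ γ)^{-1/2-n} w γ is holomorphic on the half-plane {λ ∈ ℂ : Re λ > h - (3/2)β}. -/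

import Mathlib

/-!
For `n ≥ 1` write `Λ^{-1/2-n} = Λ^{-3/2} Λ^{-(n-1)}`. Hyperbolicity gives
`Λ^{-3/2} ≤ C₂^{3/2} e^{-(3/2)βL}`, and since `L → ∞` along the cofinite filter, `Λ⁻¹ ≤ q` for a
single `q < 1`. So on `Re λ ≥ σ` the summand is dominated by the product
`(n+1) q^{n-1} · L e^{-(σ + 3β/2)L}`, whose second factor is summable over the orbits for
`σ + 3β/2 > h` (group the orbits by `⌊L⌋` and use the counting bound). The Weierstrass M-test
on each half-plane `Re λ > σ` then gives holomorphy.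
-/

open Complex Filter Topology

section Counting

variable {Γ : Type*} {L : Γ → ℝ} {C h : ℝ}

theorem summable_exp_neg_mul_of_card_le (hL : ∀ γ, 0 ≤ L γ) (hh : 0 ≤ h)
    (hcount : ∀ ℓ : ℝ, 0 < ℓ → {γ : Γ | L γ ≤ ℓ}.Finite ∧
      (Nat.card {γ : Γ | L γ ≤ ℓ} : ℝ) ≤ C * Real.exp (h * ℓ))
    {σ : ℝ} (hσ : h < σ) :
    Summable fun γ => Real.exp (-σ * L γ) := by
  set e : Γ → ℕ := fun γ => ⌊L γ⌋₊
  have fiber_subset (k : ℕ) : {γ | e γ = k} ⊆ {γ | L γ ≤ k + 1} := fun γ (hγ : ⌊L γ⌋₊ = k) =>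
    hγ ▸ (Nat.lt_floor_add_one (L γ)).le
  have fiber_finite (k : ℕ) : Finite {γ // e γ = k} :=
    ((hcount _ (by positivity)).1.subset (fiber_subset k)).to_subtype
  have fiber_sum_le (k : ℕ) : ∑' γ : {γ // e γ = k}, Real.exp (-σ * L γ) ≤
      C * Real.exp h * Real.exp (h - σ) ^ k := by
    have := fiber_finite k
    calc ∑' γ : {γ // e γ = k}, Real.exp (-σ * L γ)
        ≤ ∑' _ : {γ // e γ = k}, Real.exp (-σ * k) := by
          refine Summable.tsum_le_tsum (fun γ => Real.exp_le_exp.2 ?_) .of_finite .of_finite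
          have : (k : ℝ) ≤ L γ := (Nat.cast_le.2 γ.2.ge).trans (Nat.floor_le (hL γ))
          nlinarith
      _ = Nat.card {γ | e γ = k} * Real.exp (-σ * k) := by rw [tsum_const, nsmul_eq_mul]; rfl
      _ ≤ C * Real.exp (h * (k + 1)) * Real.exp (-σ * k) := by
          gcongr
          exact (Nat.cast_le.2 (Nat.card_mono (hcount _ (by positivity)).1 (fiber_subset k))).trans
            (hcount _ (by positivity)).2
      _ = C * Real.exp h * Real.exp (h - σ) ^ k := by
          rw [← Real.exp_nat_mul, mul_assoc, ← Real.exp_add, mul_assoc, ← Real.exp_add]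
          ring_nf
  rw [← (Equiv.sigmaFiberEquiv e).summable_iff]
  refine (summable_sigma_of_nonneg fun _ => (Real.exp_pos _).le).2
    ⟨fun k => by have := fiber_finite k; exact .of_finite, ?_⟩
  refine .of_nonneg_of_le (fun _ => tsum_nonneg fun _ => (Real.exp_pos _).le) fiber_sum_le ?_
  exact (summable_geometric_of_lt_one (Real.exp_pos _).le
    (Real.exp_lt_one_iff.2 (by linarith))).mul_left _

theorem summable_mul_exp_neg_mul_of_card_le (hL : ∀ γ, 0 ≤ L γ) (hh : 0 ≤ h)
    (hcount : ∀ ℓ : ℝ, 0 < ℓ → {γ : Γ | L γ ≤ ℓ}.Finite ∧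
      (Nat.card {γ : Γ | L γ ≤ ℓ} : ℝ) ≤ C * Real.exp (h * ℓ))
    {σ : ℝ} (hσ : h < σ) :
    Summable fun γ => L γ * Real.exp (-σ * L γ) := by
  set ε := (σ - h) / 2
  have hε : 0 < ε := by simp only [ε]; linarith
  have hslower : h < σ - ε := by simp only [ε]; linarith
  refine .of_nonneg_of_le (fun γ => by have := hL γ; positivity) (fun γ => ?_)
    ((summable_exp_neg_mul_of_card_le hL hh hcount hslower).mul_left ε⁻¹)
  -- `x ≤ exp x` trades the factor `L` for an exponential with a slightly smaller rate
  have hlin : ε * L γ ≤ Real.exp (ε * L γ) := by linarith [Real.add_one_le_exp (ε * L γ)]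
  calc L γ * Real.exp (-σ * L γ)
      = ε⁻¹ * ((ε * L γ) * Real.exp (-(ε * L γ)) * Real.exp (-(σ - ε) * L γ)) := by
        rw [mul_assoc (ε * L γ), ← Real.exp_add]; field_simp; ring_nf
    _ ≤ ε⁻¹ * (Real.exp (ε * L γ) * Real.exp (-(ε * L γ)) * Real.exp (-(σ - ε) * L γ)) := by
        gcongr
    _ = ε⁻¹ * Real.exp (-(σ - ε) * L γ) := by
        rw [← Real.exp_add, add_neg_cancel, Real.exp_zero, one_mul]

end Counting

theorem Filter.tendsto_cofinite_atTop_of_finite_sublevel {Γ : Type*} {L : Γ → ℝ}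
    (hfin : ∀ ℓ : ℝ, 0 < ℓ → {γ | L γ ≤ ℓ}.Finite) : Tendsto L cofinite atTop :=
  tendsto_atTop.2 fun b => eventually_cofinite.2 <|
    (hfin (max b 1) (by positivity)).subset fun _ hγ => (not_le.1 hγ).le.trans (le_max_left _ _)

theorem exists_forall_le_of_forall_lt_of_eventually_le {Γ α : Type*} [LinearOrder α]
    {f : Γ → α} {b c : α} (hf : ∀ γ, f γ < b) (hc : c < b) (hev : ∀ᶠ γ in cofinite, f γ ≤ c) :
    ∃ q, c ≤ q ∧ q < b ∧ ∀ γ, f γ ≤ q := by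
  rcases Set.eq_empty_or_nonempty {γ | ¬ f γ ≤ c} with hempty | hne
  · exact ⟨c, le_rfl, hc, fun γ => not_not.1 fun hγ => hempty.subset hγ⟩
  · obtain ⟨γ₀, -, hmax⟩ := Set.exists_max_image _ f (eventually_cofinite.1 hev) hne
    refine ⟨max c (f γ₀), le_max_left _ _, max_lt hc (hf γ₀), fun γ => ?_⟩
    by_cases hγ : f γ ≤ c
    · exact hγ.trans (le_max_left _ _)
    · exact (hmax γ hγ).trans (le_max_right _ _)

theorem exists_forall_inv_le_lt_one {Γ : Type*} {L Λ : Γ → ℝ} {C₂ β : ℝ}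
    (hL : Tendsto L cofinite atTop) (hΛ : ∀ γ, 1 < Λ γ) (hβ : 0 < β)
    (hhyp : ∀ γ, (Λ γ)⁻¹ ≤ C₂ * Real.exp (-β * L γ)) :
    ∃ q, 0 ≤ q ∧ q < 1 ∧ ∀ γ, (Λ γ)⁻¹ ≤ q := by
  have hdecay : Tendsto (fun γ => C₂ * Real.exp (-β * L γ)) cofinite (𝓝 0) := by
    simpa [neg_mul] using
      (Real.tendsto_exp_neg_atTop_nhds_zero.comp (hL.const_mul_atTop hβ)).const_mul C₂
  obtain ⟨q, hq, hq1, hle⟩ := exists_forall_le_of_forall_lt_of_eventually_le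
    (fun γ => inv_lt_one_of_one_lt₀ (hΛ γ)) (by norm_num : (1 / 2 : ℝ) < 1)
    ((hdecay.eventually (ge_mem_nhds (by norm_num))).mono fun γ hγ => (hhyp γ).trans hγ)
  exact ⟨q, by linarith, hq1, hle⟩

theorem summable_succ_mul_pow_pred {q : ℝ} (hq0 : 0 ≤ q) (hq1 : q < 1) :
    Summable fun n : ℕ => ((n : ℝ) + 1) * q ^ (n - 1) := by
  have hq : ‖q‖ < 1 := by rwa [Real.norm_of_nonneg hq0]
  refine (summable_nat_add_iff 1).1 <|
    ((hasSum_coe_mul_geometric_of_norm_lt_one hq).summable.add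
      ((summable_geometric_of_norm_lt_one hq).mul_left 2)).congr fun n => ?_
  push_cast
  ring

theorem Real.rpow_neg_half_sub_le {x q : ℝ} (hx : 0 < x) (hxq : x⁻¹ ≤ q) {n : ℕ} (hn : 1 ≤ n) :
    x ^ (-(1 / 2 : ℝ) - n) ≤ x⁻¹ ^ (3 / 2 : ℝ) * q ^ (n - 1) := by
  obtain ⟨m, rfl⟩ := Nat.exists_eq_add_of_le' hn
  rw [show -(1 / 2 : ℝ) - ((m + 1 : ℕ) : ℝ) = -(3 / 2) + -(m : ℝ) by push_cast; ring,
    Real.rpow_add hx, Real.rpow_neg hx.le, Real.rpow_neg hx.le, Real.inv_rpow hx.le,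
    Real.rpow_natCast, Nat.add_sub_cancel, ← inv_pow]
  gcongr

theorem differentiableOn_tsum_tsum_of_summable_norm {ι κ : Type*} {F : ι → κ → ℂ → ℂ}
    {U : Set ℂ} {u : ι × κ → ℝ} (hu : Summable u) (hF : ∀ i k, DifferentiableOn ℂ (F i k) U)
    (hU : IsOpen U) (hF_le : ∀ i k, ∀ z ∈ U, ‖F i k z‖ ≤ u (i, k)) :
    DifferentiableOn ℂ (fun z => ∑' i, ∑' k, F i k z) U :=
  (differentiableOn_tsum_of_summable_norm hu (fun p => hF p.1 p.2) hU
    fun p => hF_le p.1 p.2).congr fun z hz =>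
      ((Summable.of_norm_bounded hu fun p => hF_le p.1 p.2 z hz).tsum_prod).symm

section FaureTsujii

variable {Γ : Type*} (L Λ : Γ → ℝ) (w : Γ → ℂ)

/-- The `γ`-summand of `Z^{FT,n}_a(λ)`, with `w γ` standing for `∫_{γ^#} a`. -/
noncomputable def ftZetaTerm (lam : ℂ) (n : ℕ) (γ : Γ) : ℂ :=
  Complex.exp (-lam * (L γ : ℂ)) * ((n : ℂ) + 1) *
    ((Λ γ ^ (-(1 / 2 : ℝ) - (n : ℝ)) : ℝ) : ℂ) * w γ

theorem differentiable_ftZetaTerm (n : ℕ) (γ : Γ) :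
    Differentiable ℂ fun lam => ftZetaTerm L Λ w lam n γ := by
  unfold ftZetaTerm
  fun_prop

variable {L Λ w}

theorem norm_ftZetaTerm {γ : Γ} (hΛ : 0 ≤ Λ γ) (lam : ℂ) (n : ℕ) :
    ‖ftZetaTerm L Λ w lam n γ‖ =
      Real.exp (-lam.re * L γ) * (n + 1) * Λ γ ^ (-(1 / 2 : ℝ) - n) * ‖w γ‖ := by
  rw [ftZetaTerm, norm_mul, norm_mul, norm_mul, Complex.norm_exp, Complex.norm_real,
    Real.norm_of_nonneg (Real.rpow_nonneg hΛ _),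
    show (n : ℂ) + 1 = ((n + 1 : ℝ) : ℂ) by push_cast; rfl,
    Complex.norm_real, Real.norm_of_nonneg (by positivity)]
  simp

theorem norm_ftZetaTerm_le {γ : Γ} {C₂ β A q σ : ℝ} {lam : ℂ} {n : ℕ}
    (hL : 0 ≤ L γ) (hΛ : 0 < Λ γ) (hC₂ : 0 ≤ C₂) (hhyp : (Λ γ)⁻¹ ≤ C₂ * Real.exp (-β * L γ))
    (hw : ‖w γ‖ ≤ A * L γ) (hq : (Λ γ)⁻¹ ≤ q) (hσ : σ ≤ lam.re) (hn : 1 ≤ n) :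
    ‖ftZetaTerm L Λ w lam n γ‖ ≤ A * C₂ ^ (3 / 2 : ℝ) *
      (((n : ℝ) + 1) * q ^ (n - 1) * (L γ * Real.exp (-(σ + 3 / 2 * β) * L γ))) := by
  have hΛ32 : (Λ γ)⁻¹ ^ (3 / 2 : ℝ) ≤ C₂ ^ (3 / 2 : ℝ) * Real.exp (-(3 / 2 * β) * L γ) :=
    calc (Λ γ)⁻¹ ^ (3 / 2 : ℝ) ≤ (C₂ * Real.exp (-β * L γ)) ^ (3 / 2 : ℝ) := by gcongr
      _ = C₂ ^ (3 / 2 : ℝ) * Real.exp (-(3 / 2 * β) * L γ) := by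
        rw [Real.mul_rpow hC₂ (Real.exp_pos _).le, ← Real.exp_mul]
        ring_nf
  have hq0 : 0 ≤ q := (inv_nonneg.2 hΛ.le).trans hq
  have hpow : Λ γ ^ (-(1 / 2 : ℝ) - n) ≤
      C₂ ^ (3 / 2 : ℝ) * Real.exp (-(3 / 2 * β) * L γ) * q ^ (n - 1) :=
    (Real.rpow_neg_half_sub_le hΛ hq hn).trans (by gcongr)
  rw [norm_ftZetaTerm hΛ.le]
  calc Real.exp (-lam.re * L γ) * (n + 1) * Λ γ ^ (-(1 / 2 : ℝ) - n) * ‖w γ‖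
      ≤ Real.exp (-σ * L γ) * (n + 1) *
          (C₂ ^ (3 / 2 : ℝ) * Real.exp (-(3 / 2 * β) * L γ) * q ^ (n - 1)) * (A * L γ) := by
        gcongr
    _ = _ := by
        rw [show -(σ + 3 / 2 * β) * L γ = -σ * L γ + -(3 / 2 * β) * L γ by ring, Real.exp_add]
        ring

end FaureTsujii

theorem FT_zeta_tail_holomorphic_general
    (Γ : Type*) (L : Γ → ℝ) (Λ : Γ → ℝ) (w : Γ → ℂ)
    (ℓ₀ : ℝ) (hℓ₀ : 0 < ℓ₀) (hL : ∀ γ, ℓ₀ ≤ L γ)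
    (C₁ h : ℝ) (hh : 0 ≤ h)
    (hcount : ∀ ℓ : ℝ, 0 < ℓ → {γ : Γ | L γ ≤ ℓ}.Finite ∧
      (Nat.card {γ : Γ | L γ ≤ ℓ} : ℝ) ≤ C₁ * Real.exp (h * ℓ))
    (hΛ : ∀ γ, 1 < Λ γ)
    (C₂ β : ℝ) (hC₂ : 0 < C₂) (hβ : 0 < β)
    (hhyp : ∀ γ, (Λ γ)⁻¹ ≤ C₂ * Real.exp (-β * L γ))
    (A : ℝ) (hw : ∀ γ, ‖w γ‖ ≤ A * L γ) :
    (∀ lam : ℂ, h - (3 / 2) * β < lam.re →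
      Summable (fun p : {n : ℕ // 1 ≤ n} × Γ =>
        ‖Complex.exp (-lam * (L p.2 : ℂ)) * ((p.1.1 : ℂ) + 1) *
          ((Λ p.2 ^ (-(1 / 2 : ℝ) - (p.1.1 : ℝ)) : ℝ) : ℂ) * w p.2‖)) ∧
    DifferentiableOn ℂ
      (fun lam : ℂ => ∑' n : {n : ℕ // 1 ≤ n}, ∑' γ : Γ,
        Complex.exp (-lam * (L γ : ℂ)) * ((n.1 : ℂ) + 1) *
          ((Λ γ ^ (-(1 / 2 : ℝ) - (n.1 : ℝ)) : ℝ) : ℂ) * w γ)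
      {lam : ℂ | h - (3 / 2) * β < lam.re} := by
  have hLnn γ : 0 ≤ L γ := hℓ₀.le.trans (hL γ)
  obtain ⟨q, hq0, hq1, hq⟩ := exists_forall_inv_le_lt_one
    (tendsto_cofinite_atTop_of_finite_sublevel fun ℓ hℓ => (hcount ℓ hℓ).1) hΛ hβ hhyp
  have hmajorant (σ : ℝ) (hσ : h - 3 / 2 * β < σ) : Summable fun p : {n : ℕ // 1 ≤ n} × Γ =>
      A * C₂ ^ (3 / 2 : ℝ) * (((p.1.1 : ℝ) + 1) * q ^ (p.1.1 - 1) *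
        (L p.2 * Real.exp (-(σ + 3 / 2 * β) * L p.2))) :=
    (((summable_succ_mul_pow_pred hq0 hq1).subtype _).mul_of_nonneg
      (summable_mul_exp_neg_mul_of_card_le hLnn hh hcount (by linarith))
      (fun _ => mul_nonneg (by positivity) (pow_nonneg hq0 _))
      fun γ => by have := hLnn γ; positivity).mul_left _
  have hbound (σ : ℝ) (lam : ℂ) (hσ : σ ≤ lam.re) (p : {n : ℕ // 1 ≤ n} × Γ) :=
    norm_ftZetaTerm_le (w := w) (hLnn p.2) (zero_lt_one.trans (hΛ p.2)) hC₂.le (hhyp p.2) (hw p.2)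
      (hq p.2) hσ p.1.2
  refine ⟨fun lam hlam => (hmajorant _ hlam).of_nonneg_of_le (fun _ => norm_nonneg _)
    (hbound _ lam le_rfl), fun lam hlam => ?_⟩
  obtain ⟨σ, hσ, hσlam⟩ : ∃ σ, h - 3 / 2 * β < σ ∧ σ < lam.re := exists_between hlam
  have hU : IsOpen {z : ℂ | σ < z.re} := isOpen_lt continuous_const continuous_re
  refine (DifferentiableOn.differentiableAt ?_ (hU.mem_nhds hσlam)).differentiableWithinAt
  exact differentiableOn_tsum_tsum_of_summable_norm (hmajorant σ hσ)
    (fun n γ => (differentiable_ftZetaTerm L Λ w n γ).differentiableOn) hU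
    fun n γ z hz => hbound σ z (le_of_lt hz) (n, γ)

/-- The tail `∑_{n≥1} ∑_γ e^{-λ L_γ} (n+1) Λ_γ^{-1/2-n} w_γ` of the expanded
Faure–Tsujii weighted zeta function converges absolutely for
`Re λ > h - (3/2)β` and is holomorphic on that half-plane. -/
theorem FT_zeta_tail_holomorphic
    (Γ : Type*) [Countable Γ] (L : Γ → ℝ) (Λ : Γ → ℝ) (w : Γ → ℂ)
    (ℓ₀ : ℝ) (hℓ₀ : 0 < ℓ₀) (hL : ∀ γ, ℓ₀ ≤ L γ)
    (C₁ h : ℝ) (hC₁ : 0 < C₁) (hh : 0 ≤ h)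
    (hcount : ∀ ℓ : ℝ, 0 < ℓ → {γ : Γ | L γ ≤ ℓ}.Finite ∧
      (Nat.card {γ : Γ | L γ ≤ ℓ} : ℝ) ≤ C₁ * Real.exp (h * ℓ))
    (hΛ : ∀ γ, 1 < Λ γ)
    (C₂ β : ℝ) (hC₂ : 0 < C₂) (hβ : 0 < β)
    (hhyp : ∀ γ, (Λ γ)⁻¹ ≤ C₂ * Real.exp (-β * L γ))
    (A : ℝ) (hA : 0 < A) (hw : ∀ γ, ‖w γ‖ ≤ A * L γ) :
    (∀ lam : ℂ, h - (3 / 2) * β < lam.re →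
      Summable (fun p : {n : ℕ // 1 ≤ n} × Γ =>
        ‖Complex.exp (-lam * (L p.2 : ℂ)) * ((p.1.1 : ℂ) + 1) *
          ((Λ p.2 ^ (-(1 / 2 : ℝ) - (p.1.1 : ℝ)) : ℝ) : ℂ) * w p.2‖)) ∧
    DifferentiableOn ℂ
      (fun lam : ℂ => ∑' n : {n : ℕ // 1 ≤ n}, ∑' γ : Γ,
        Complex.exp (-lam * (L γ : ℂ)) * ((n.1 : ℂ) + 1) *
          ((Λ γ ^ (-(1 / 2 : ℝ) - (n.1 : ℝ)) : ℝ) : ℂ) * w γ)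
      {lam : ℂ | h - (3 / 2) * β < lam.re} :=
  FT_zeta_tail_holomorphic_general Γ L Λ w ℓ₀ hℓ₀ hL C₁ h hh hcount hΛ C₂ β hC₂ hβ hhyp A hw
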